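/- Let A be a commutative ring in which 2 is invertible, let n ≥ 1 be an integer, and let F, a ∈ A. Then B := A[u, v]/(uv − F, u^n + v^n − 2a) is a free A-module of rank 2n; more precisely, the images of the 2n elements 1, u, u², …, u^(n−1), v, v², …, v^(n−1), and u^n − v^n form an A-basis of B. -/

import Mathlib

/-!
Put `p = u + v`. Since `uv = F`, the Dickson identity `Dₙ(x + y, xy) = xⁿ + yⁿ` says that `p` is a
root of the monic degree-`n` polynomial `Dₙ(X, F) − 2a`, and `u` is a root of `X² − pX + F`.
So `u ↦ r`, `v ↦ p − r` maps `B` onto the tower `A[p, r]/(Dₙ(p, F) − 2a, r² − pr + F)`, which is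
free of rank `2n` over `A`. When `2` is a unit, the `2n` given elements span `B`: their span
contains `1` and is stable under multiplication by `u` and `v`, by `uv = F` and
`2uⁿ = 2a + (uⁿ − vⁿ)`, `2vⁿ = 2a − (uⁿ − vⁿ)`. A spanning family of `2n` vectors in a module
that surjects onto a free module of rank `2n` is a basis, because a surjective endomorphism of a
finitely generated module is injective.
-/

noncomputable section

/-- The ideal `(uv − F, uⁿ + vⁿ − 2a)` in `A[u, v]`. -/
def dihedralIdeal (A : Type) [CommRing A] (n : ℕ) (F a : A) :
    Ideal (MvPolynomial (Fin 2) A) :=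
  Ideal.span {MvPolynomial.X 0 * MvPolynomial.X 1 - MvPolynomial.C F,
    MvPolynomial.X 0 ^ n + MvPolynomial.X 1 ^ n - MvPolynomial.C (2 * a)}

/-- The ring `B = A[u, v]/(uv − F, uⁿ + vⁿ − 2a)`, the coordinate ring of the simple
dihedral cover of `Spec A` determined by the data `F` and `a`. -/
abbrev DihedralCoverRing (A : Type) [CommRing A] (n : ℕ) (F a : A) : Type :=
  MvPolynomial (Fin 2) A ⧸ dihedralIdeal A n F a

/-- The image `u` of the first variable in `B`. -/
def uElt (A : Type) [CommRing A] (n : ℕ) (F a : A) : DihedralCoverRing A n F a :=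
  Ideal.Quotient.mk _ (MvPolynomial.X 0)

/-- The image `v` of the second variable in `B`. -/
def vElt (A : Type) [CommRing A] (n : ℕ) (F a : A) : DihedralCoverRing A n F a :=
  Ideal.Quotient.mk _ (MvPolynomial.X 1)

namespace Polynomial

variable {R : Type*} [CommRing R]

theorem dickson_one_eval_add (x y : R) :
    ∀ m : ℕ, (dickson 1 (x * y) m).eval (x + y) = x ^ m + y ^ m
  | 0 => by norm_num
  | 1 => by simp
  | m + 2 => by
    simp only [dickson_add_two, eval_sub, eval_mul, eval_X, eval_C, dickson_one_eval_add x y m,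
      dickson_one_eval_add x y (m + 1)]
    ring

theorem natDegree_dickson_le (k : ℕ) (c : R) : ∀ m : ℕ, (dickson k c m).natDegree ≤ m
  | 0 => (natDegree_sub_le _ _).trans (by simp)
  | 1 => by simpa using natDegree_X_le
  | m + 2 => by
    rw [dickson_add_two]
    refine (natDegree_sub_le _ _).trans (max_le ?_ ?_)
    · exact natDegree_mul_le.trans
        (by have := natDegree_dickson_le k c (m + 1); have := natDegree_X_le (R := R); omega)
    · exact (natDegree_C_mul_le _ _).trans ((natDegree_dickson_le k c m).trans (by omega))

theorem coeff_dickson_succ_self (k : ℕ) (c : R) :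
    ∀ m : ℕ, (dickson k c (m + 1)).coeff (m + 1) = 1
  | 0 => by simp
  | m + 1 => by
    rw [dickson_add_two, coeff_sub, coeff_X_mul, coeff_dickson_succ_self k c m, coeff_C_mul,
      coeff_eq_zero_of_natDegree_lt ((natDegree_dickson_le k c m).trans_lt (by omega)),
      mul_zero, sub_zero]

theorem natDegree_dickson [Nontrivial R] (k : ℕ) (c : R) {m : ℕ} (hm : m ≠ 0) :
    (dickson k c m).natDegree = m := by
  obtain ⟨m, rfl⟩ := Nat.exists_eq_succ_of_ne_zero hm
  exact natDegree_eq_of_le_of_coeff_ne_zero (natDegree_dickson_le k c _)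
    (by rw [coeff_dickson_succ_self]; exact one_ne_zero)

end Polynomial

open Polynomial in
theorem AdjoinRoot.adjoin_algebraMap_root_root_eq_top {A : Type*} [CommRing A] (f : A[X])
    (g : (AdjoinRoot f)[X]) :
    Algebra.adjoin A {algebraMap (AdjoinRoot f) (AdjoinRoot g) (root f), root g} = ⊤ := by
  set T := Algebra.adjoin A {algebraMap (AdjoinRoot f) (AdjoinRoot g) (root f), root g}
  have hbase : ∀ d : AdjoinRoot f, algebraMap (AdjoinRoot f) (AdjoinRoot g) d ∈ T := by
    intro d
    induction d using AdjoinRoot.induction_on with | ih q => ?_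
    rw [← AdjoinRoot.aeval_eq, ← aeval_algebraMap_apply]
    exact Algebra.adjoin_mono (by simp) (aeval_mem_adjoin_singleton A _)
  refine eq_top_iff.mpr fun x _ => ?_
  induction x using AdjoinRoot.induction_on with | ih q => ?_
  rw [← AdjoinRoot.aeval_eq, aeval_eq_sum_range]
  refine Subalgebra.sum_mem _ fun i _ => ?_
  rw [Algebra.smul_def]
  exact mul_mem (hbase _) (pow_mem (Algebra.subset_adjoin (by simp)) _)

theorem linearIndependent_of_span_eq_top_of_surjective {R M N ι : Type*} [Ring R]
    [OrzechProperty R] [StrongRankCondition R] [AddCommGroup M] [Module R M] [AddCommGroup N]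
    [Module R N] [Fintype ι] {b : ι → M} (hb : Submodule.span R (Set.range b) = ⊤)
    {f : M →ₗ[R] N} (hf : Function.Surjective f) (hcard : Fintype.card ι ≤ Module.finrank R N) :
    LinearIndependent R b := by
  have : Module.Finite R M := .of_surjective (Finsupp.linearCombination R b)
    (LinearMap.range_eq_top.mp ((Finsupp.range_linearCombination R).trans hb))
  exact linearIndependent_of_top_le_span_of_card_le_finrank hb.ge
    (hcard.trans (f.finrank_le_finrank_of_surjective hf))

theorem Submodule.eq_top_of_one_mem_of_forall_mk_X_mul_mem {A σ : Type*} [CommRing A]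
    {I : Ideal (MvPolynomial σ A)} {S : Submodule A (MvPolynomial σ A ⧸ I)} (h1 : 1 ∈ S)
    (hX : ∀ i, ∀ x ∈ S, Ideal.Quotient.mk I (MvPolynomial.X i) * x ∈ S) : S = ⊤ := by
  refine Submodule.eq_top_iff'.mpr fun y => ?_
  obtain ⟨p, rfl⟩ := Ideal.Quotient.mk_surjective y
  induction p using MvPolynomial.induction_on with
  | C r =>
    rw [← MvPolynomial.algebraMap_eq, Ideal.Quotient.mk_algebraMap, Algebra.algebraMap_eq_smul_one]
    exact S.smul_mem r h1
  | add p q hp hq => rw [map_add]; exact add_mem hp hq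
  | mul_X p i hp => rw [map_mul, mul_comm]; exact hX i _ hp

namespace DihedralCoverRing

variable {A : Type} [CommRing A] {n : ℕ} {F a : A}

theorem algebraMap_eq_mk_C (r : A) :
    algebraMap A (DihedralCoverRing A n F a) r = Ideal.Quotient.mk _ (MvPolynomial.C r) := by
  rw [← MvPolynomial.algebraMap_eq, Ideal.Quotient.mk_algebraMap]

/-- `rw [Algebra.smul_def]` fails on `B`: its `A`-action is the quotient-module one, which agrees
with the algebra action only up to unfolding. -/
theorem smul_def (r : A) (x : DihedralCoverRing A n F a) :
    r • x = algebraMap A (DihedralCoverRing A n F a) r * x :=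
  Algebra.smul_def r x

theorem uElt_mul_vElt : uElt A n F a * vElt A n F a = algebraMap A _ F := by
  rw [uElt, vElt, ← map_mul, algebraMap_eq_mk_C, Ideal.Quotient.eq]
  exact Ideal.subset_span (Set.mem_insert _ _)

theorem uElt_pow_add_vElt_pow :
    uElt A n F a ^ n + vElt A n F a ^ n = algebraMap A _ (2 * a) := by
  rw [uElt, vElt, ← map_pow, ← map_pow, ← map_add, algebraMap_eq_mk_C, Ideal.Quotient.eq]
  exact Ideal.subset_span (Set.mem_insert_of_mem _ rfl)

def lift {S : Type*} [CommRing S] [Algebra A S] (x y : S) (hxy : x * y = algebraMap A S F)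
    (hpow : x ^ n + y ^ n = algebraMap A S (2 * a)) : DihedralCoverRing A n F a →ₐ[A] S :=
  Ideal.Quotient.liftₐ _ (MvPolynomial.aeval ![x, y]) fun _ hp => RingHom.mem_ker.mp <|
    (Ideal.span_le (I := RingHom.ker _)).mpr (by rintro q (rfl | rfl) <;> simp [hxy, hpow]) hp

section lift

variable {S : Type*} [CommRing S] [Algebra A S] {x y : S} (hxy : x * y = algebraMap A S F)
  (hpow : x ^ n + y ^ n = algebraMap A S (2 * a))

@[simp]
theorem lift_uElt : lift x y hxy hpow (uElt A n F a) = x :=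
  MvPolynomial.aeval_X ![x, y] 0

@[simp]
theorem lift_vElt : lift x y hxy hpow (vElt A n F a) = y :=
  MvPolynomial.aeval_X ![x, y] 1

end lift

variable (A n F a) in
def basisFun : Fin n ⊕ Fin n → DihedralCoverRing A n F a :=
  Sum.elim (fun k => uElt A n F a ^ (k : ℕ))
    fun k => if (k : ℕ) = 0 then uElt A n F a ^ n - vElt A n F a ^ n else vElt A n F a ^ (k : ℕ)

@[simp]
theorem basisFun_inl (k : Fin n) : basisFun A n F a (.inl k) = uElt A n F a ^ (k : ℕ) := rfl

theorem basisFun_inr_of_eq_zero {k : Fin n} (hk : (k : ℕ) = 0) :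
    basisFun A n F a (.inr k) = uElt A n F a ^ n - vElt A n F a ^ n := if_pos hk

theorem basisFun_inr_of_ne_zero {k : Fin n} (hk : (k : ℕ) ≠ 0) :
    basisFun A n F a (.inr k) = vElt A n F a ^ (k : ℕ) := if_neg hk

section span

local notation "S" => Submodule.span A (Set.range (basisFun A n F a))
local notation "u" => uElt A n F a
local notation "v" => vElt A n F a

theorem basisFun_mem_span (i : Fin n ⊕ Fin n) : basisFun A n F a i ∈ S :=
  Submodule.subset_span ⟨i, rfl⟩

theorem one_mem_span (hn : n ≠ 0) : 1 ∈ S := by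
  simpa using basisFun_mem_span (F := F) (a := a) (.inl ⟨0, Nat.pos_of_ne_zero hn⟩)

theorem uElt_pow_sub_vElt_pow_mem_span (hn : n ≠ 0) : u ^ n - v ^ n ∈ S := by
  rw [← basisFun_inr_of_eq_zero (k := ⟨0, Nat.pos_of_ne_zero hn⟩) rfl]
  exact basisFun_mem_span _

theorem uElt_pow_mem_span (h2 : IsUnit (2 : A)) (hn : n ≠ 0) {k : ℕ} (hk : k ≤ n) :
    u ^ k ∈ S := by
  rcases hk.lt_or_eq with hk | hk
  · simpa using basisFun_mem_span (F := F) (a := a) (.inl ⟨k, hk⟩)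
  rw [hk]
  have h : (2 : A) • u ^ n = (2 * a) • 1 + (u ^ n - v ^ n) := by
    rw [smul_def, smul_def, mul_one, map_ofNat]
    linear_combination (uElt_pow_add_vElt_pow (F := F))
  rw [← Submodule.smul_mem_iff_of_isUnit _ h2, h]
  exact add_mem (Submodule.smul_mem _ _ (one_mem_span hn)) (uElt_pow_sub_vElt_pow_mem_span hn)

theorem vElt_pow_mem_span (h2 : IsUnit (2 : A)) (hn : n ≠ 0) {k : ℕ} (hk : k ≤ n) :
    v ^ k ∈ S := by
  rcases hk.lt_or_eq with hk | hk
  · rcases eq_or_ne k 0 with rfl | hk0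
    · simpa using one_mem_span hn
    rw [← basisFun_inr_of_ne_zero (k := ⟨k, hk⟩) hk0]
    exact basisFun_mem_span _
  rw [hk]
  have h : (2 : A) • v ^ n = (2 * a) • 1 - (u ^ n - v ^ n) := by
    rw [smul_def, smul_def, mul_one, map_ofNat]
    linear_combination (uElt_pow_add_vElt_pow (F := F))
  rw [← Submodule.smul_mem_iff_of_isUnit _ h2, h]
  exact sub_mem (Submodule.smul_mem _ _ (one_mem_span hn)) (uElt_pow_sub_vElt_pow_mem_span hn)

theorem uElt_mul_basisFun_mem_span (h2 : IsUnit (2 : A)) (hn : n ≠ 0) (i : Fin n ⊕ Fin n) :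
    u * basisFun A n F a i ∈ S := by
  have huv : u * v = algebraMap A _ F := uElt_mul_vElt
  have hpow : u ^ n + v ^ n = algebraMap A _ (2 * a) := uElt_pow_add_vElt_pow
  rcases i with k | k
  · rw [basisFun_inl, ← pow_succ']
    exact uElt_pow_mem_span h2 hn k.2
  by_cases hk : (k : ℕ) = 0
  · have hvn : v ^ n = v * v ^ (n - 1) := by rw [← pow_succ', Nat.sub_add_cancel (by omega)]
    have h : u * (u ^ n - v ^ n) = (2 * a) • u ^ 1 - (2 * F) • v ^ (n - 1) := by
      simp only [smul_def, map_mul, map_ofNat] at hpow ⊢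
      linear_combination u * hpow - 2 * v ^ (n - 1) * huv - 2 * u * hvn
    rw [basisFun_inr_of_eq_zero hk, h]
    exact sub_mem (Submodule.smul_mem _ _ (uElt_pow_mem_span h2 hn (by omega)))
      (Submodule.smul_mem _ _ (vElt_pow_mem_span h2 hn (by omega)))
  · obtain ⟨j, hj⟩ := Nat.exists_eq_succ_of_ne_zero hk
    have h : u * v ^ (j + 1) = F • v ^ j := by
      rw [smul_def]
      linear_combination v ^ j * huv
    rw [basisFun_inr_of_ne_zero hk, hj, h]
    exact Submodule.smul_mem _ _ (vElt_pow_mem_span h2 hn (by omega))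

theorem vElt_mul_basisFun_mem_span (h2 : IsUnit (2 : A)) (hn : n ≠ 0) (i : Fin n ⊕ Fin n) :
    v * basisFun A n F a i ∈ S := by
  have huv : u * v = algebraMap A _ F := uElt_mul_vElt
  have hpow : u ^ n + v ^ n = algebraMap A _ (2 * a) := uElt_pow_add_vElt_pow
  rcases i with k | k
  · rw [basisFun_inl]
    by_cases hk : (k : ℕ) = 0
    · rw [hk, pow_zero, mul_one, ← pow_one v]
      exact vElt_pow_mem_span h2 hn (by omega)
    obtain ⟨j, hj⟩ := Nat.exists_eq_succ_of_ne_zero hk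
    have h : v * u ^ (j + 1) = F • u ^ j := by
      rw [smul_def]
      linear_combination u ^ j * huv
    rw [hj, h]
    exact Submodule.smul_mem _ _ (uElt_pow_mem_span h2 hn (by omega))
  by_cases hk : (k : ℕ) = 0
  · have hun : u ^ n = u * u ^ (n - 1) := by rw [← pow_succ', Nat.sub_add_cancel (by omega)]
    have h : v * (u ^ n - v ^ n) = (2 * F) • u ^ (n - 1) - (2 * a) • v ^ 1 := by
      simp only [smul_def, map_mul, map_ofNat] at hpow ⊢
      linear_combination 2 * u ^ (n - 1) * huv - v * hpow + 2 * v * hun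
    rw [basisFun_inr_of_eq_zero hk, h]
    exact sub_mem (Submodule.smul_mem _ _ (uElt_pow_mem_span h2 hn (by omega)))
      (Submodule.smul_mem _ _ (vElt_pow_mem_span h2 hn (by omega)))
  · rw [basisFun_inr_of_ne_zero hk, ← pow_succ']
    exact vElt_pow_mem_span h2 hn k.2

theorem span_range_basisFun (h2 : IsUnit (2 : A)) (hn : n ≠ 0) : S = ⊤ := by
  refine Submodule.eq_top_of_one_mem_of_forall_mk_X_mul_mem (one_mem_span hn) fun i => ?_
  have hstable : ∀ c : DihedralCoverRing A n F a, (∀ j, c * basisFun A n F a j ∈ S) →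
      S ≤ Submodule.comap (LinearMap.mulLeft A c) S := fun c hc =>
    Submodule.span_le.mpr (by rintro _ ⟨j, rfl⟩; exact hc j)
  fin_cases i
  · exact hstable _ (uElt_mul_basisFun_mem_span h2 hn)
  · exact hstable _ (vElt_mul_basisFun_mem_span h2 hn)

end span

open Polynomial

variable (A n F a) in
def tracePoly : A[X] := dickson 1 F n - C (2 * a)

variable (A n F a) in
abbrev TraceRing : Type := AdjoinRoot (tracePoly A n F a)

variable (A n F a) in
def quadPoly : (TraceRing A n F a)[X] :=
  X ^ 2 - C (AdjoinRoot.root _) * X + C (algebraMap A _ F)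

variable (A n F a) in
abbrev QuadRing : Type := AdjoinRoot (quadPoly A n F a)

theorem tracePoly_monic (hn : n ≠ 0) : (tracePoly A n F a).Monic := by
  obtain ⟨m, rfl⟩ := Nat.exists_eq_succ_of_ne_zero hn
  refine monic_of_natDegree_le_of_coeff_eq_one _
    (natDegree_sub_C.le.trans (natDegree_dickson_le 1 F _)) ?_
  rw [tracePoly, coeff_sub, coeff_dickson_succ_self, coeff_C_of_ne_zero (by omega), sub_zero]

theorem finrank_traceRing [Nontrivial A] (hn : n ≠ 0) :
    Module.finrank A (TraceRing A n F a) = n := by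
  rw [(AdjoinRoot.powerBasis' (tracePoly_monic hn)).finrank, AdjoinRoot.powerBasis'_dim,
    tracePoly, natDegree_sub_C, natDegree_dickson 1 F hn]

theorem quadPoly_monic : (quadPoly A n F a).Monic := by
  unfold quadPoly; monicity!

theorem natDegree_quadPoly [Nontrivial (TraceRing A n F a)] :
    (quadPoly A n F a).natDegree = 2 := by
  unfold quadPoly; compute_degree!

theorem finrank_quadRing [Nontrivial A] (hn : n ≠ 0) :
    Module.finrank A (QuadRing A n F a) = n * 2 := by
  have : Nontrivial (TraceRing A n F a) :=
    Module.nontrivial_of_finrank_pos (R := A) (by rw [finrank_traceRing hn]; omega)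
  have := (tracePoly_monic (F := F) (a := a) hn).free_adjoinRoot
  have := (quadPoly_monic (A := A) (n := n) (F := F) (a := a)).free_adjoinRoot
  rw [← Module.finrank_mul_finrank A (TraceRing A n F a), finrank_traceRing hn,
    (AdjoinRoot.powerBasis' quadPoly_monic).finrank, AdjoinRoot.powerBasis'_dim,
    natDegree_quadPoly]

variable (A n F a) in
abbrev quadTrace : QuadRing A n F a :=
  algebraMap (TraceRing A n F a) _ (AdjoinRoot.root (tracePoly A n F a))

variable (A n F a) in
abbrev quadRoot : QuadRing A n F a := AdjoinRoot.root (quadPoly A n F a)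

theorem quadRoot_mul_quadTrace_sub :
    quadRoot A n F a * (quadTrace A n F a - quadRoot A n F a) = algebraMap A _ F := by
  have h : aeval (quadRoot A n F a) (quadPoly A n F a) = 0 :=
    (AdjoinRoot.aeval_eq _).trans AdjoinRoot.mk_self
  simp only [quadPoly, map_add, map_sub, map_mul, map_pow, aeval_X, aeval_C,
    ← IsScalarTower.algebraMap_apply] at h
  linear_combination -h

theorem quadRoot_pow_add_quadTrace_sub_pow :
    quadRoot A n F a ^ n + (quadTrace A n F a - quadRoot A n F a) ^ n =
      algebraMap A _ (2 * a) := by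
  have htrace : aeval (AdjoinRoot.root (tracePoly A n F a)) (dickson 1 F n) =
      algebraMap A _ (2 * a) := by
    rw [← sub_eq_zero, ← aeval_C (AdjoinRoot.root (tracePoly A n F a)), ← map_sub]
    exact (AdjoinRoot.aeval_eq _).trans AdjoinRoot.mk_self
  rw [← dickson_one_eval_add, quadRoot_mul_quadTrace_sub, add_sub_cancel, ← map_dickson,
    eval_map_algebraMap, quadTrace, aeval_algebraMap_apply, htrace,
    ← IsScalarTower.algebraMap_apply]

variable (A n F a) in
def toQuadRing : DihedralCoverRing A n F a →ₐ[A] QuadRing A n F a :=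
  lift _ _ quadRoot_mul_quadTrace_sub quadRoot_pow_add_quadTrace_sub_pow

theorem toQuadRing_surjective : Function.Surjective (toQuadRing A n F a) := by
  rw [← AlgHom.range_eq_top, eq_top_iff, ← AdjoinRoot.adjoin_algebraMap_root_root_eq_top,
    Algebra.adjoin_le_iff]
  rintro _ (rfl | rfl)
  · exact ⟨uElt A n F a + vElt A n F a, by simp [toQuadRing, quadTrace]⟩
  · exact ⟨uElt A n F a, lift_uElt _ _⟩

end DihedralCoverRing

theorem dihedralCoverRing_free_of_rank_two_n
    (A : Type) [CommRing A] (h2 : IsUnit (2 : A)) (n : ℕ) (hn : 1 ≤ n) (F a : A) :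
    Module.Free A (DihedralCoverRing A n F a) ∧
    ∃ b : Module.Basis (Fin n ⊕ Fin n) A (DihedralCoverRing A n F a),
      (∀ k : Fin n, b (Sum.inl k) = uElt A n F a ^ (k : ℕ)) ∧
      (∀ k : Fin n, 0 < (k : ℕ) → b (Sum.inr k) = vElt A n F a ^ (k : ℕ)) ∧
      (∀ k : Fin n, (k : ℕ) = 0 →
        b (Sum.inr k) = uElt A n F a ^ n - vElt A n F a ^ n) := by
  open DihedralCoverRing in
  have hn0 : n ≠ 0 := Nat.one_le_iff_ne_zero.mp hn
  have hspan := span_range_basisFun (F := F) (a := a) h2 hn0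
  have hli : LinearIndependent A (basisFun A n F a) := by
    rcases subsingleton_or_nontrivial A with _ | _
    · exact linearIndependent_of_subsingleton
    refine linearIndependent_of_span_eq_top_of_surjective hspan
      (f := (toQuadRing A n F a).toLinearMap) toQuadRing_surjective ?_
    rw [finrank_quadRing hn0, Fintype.card_sum, Fintype.card_fin]
    omega
  let b := Module.Basis.mk hli hspan.ge
  refine ⟨.of_basis b, b, fun k => ?_, fun k hk => ?_, fun k hk => ?_⟩
  · simp [b]
  · simp [b, basisFun_inr_of_ne_zero hk.ne']
  · simp [b, basisFun_inr_of_eq_zero hk]
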